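/- Let X, Y be Banach spaces, F : X ⇉ Y, (x̄,ȳ) ∈ gph F, and γ > 0. If srg₁⁺F(x̄,ȳ) < γ, then there exists a function f : X → Y, Lipschitz continuous around x̄ with f(x̄) = 0 and lip f(x̄) < γ, such that srg₁⁺(F+f)(x̄,ȳ) = 0. Consequently rad[SR]_{lip}F(x̄,ȳ) ≤ srg₁⁺F(x̄,ȳ). -/

import Mathlib

/-!
Fix `c` with `srg₁⁺ F (x̄, ȳ) < c < γ` and a small `μ > 0`. The definition of `srg₁⁺` yields graph
points `(xₖ, yₖ)` and `xₖ* ∈ D*_{εₖ} F (xₖ, yₖ) (yₖ*)` with `εₖ → 0`,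
`‖yₖ - ȳ‖ / ‖xₖ - x̄‖ + ‖xₖ*‖ < c`, and `xₖ → x̄` so fast that the balls
`B (xₖ, (1 - μ) ‖xₖ - x̄‖)` are far apart. On each ball put a bump, Lipschitz with constant
`(c + μ) / (1 - 2μ) < γ` and equal to `ȳ - yₖ + (τₖ - xₖ* (u - xₖ)) • wₖ` near `xₖ`, where
`yₖ* wₖ ≈ 1`; let `f` be their sum. Near `xₖ` the graph of `F + f` is that of `F` with `(xₖ, yₖ)`
moved to `(xₖ, ȳ + τₖ wₖ)` and the linear part `xₖ*` cancelled, so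
`0 ∈ D*_{(1 + 2c) εₖ} (F + f) (xₖ, ȳ + τₖ wₖ) (yₖ*)`; as `τₖ = o(‖xₖ - x̄‖)`, `srg₁⁺ (F + f) = 0`.
Taking `τₖ` still large compared with `εₖ Rₖ`, the `εₖ`-normal inequality at `(xₖ, yₖ)` keeps `ȳ`
out of `(F + f) u` for `‖u - xₖ‖ < Rₖ`, while `d (ȳ, (F + f) xₖ) ≤ τₖ = o(Rₖ)`: `F + f` is not
subregular at `(x̄, ȳ)`, which bounds the radius.
-/

open Metric Set ENNReal NNReal EMetric Filter Topology

variable {X Y : Type*} [NormedAddCommGroup X] [NormedSpace ℝ X]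
  [NormedAddCommGroup Y] [NormedSpace ℝ Y]

/-- The inverse of a set-valued mapping. -/
def svInv (F : X → Set Y) (y : Y) : Set X := {x | y ∈ F x}

/-- The sum `F + f` of a set-valued mapping and a single-valued function. -/
def addFun (F : X → Set Y) (f : X → Y) : X → Set Y := fun x => {z | z - f x ∈ F x}

/-- The Fréchet `ε`-coderivative of `F` at `(x, y) ∈ gph F` (sum norm on `X × Y`). -/
def epsCoderiv (ε : ℝ) (F : X → Set Y) (x : X) (y : Y) (ys : Y →L[ℝ] ℝ) :
    Set (X →L[ℝ] ℝ) :=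
  {xs | ∀ η > 0, ∃ δ > 0, ∀ u v, v ∈ F u → ‖u - x‖ + ‖v - y‖ < δ →
    xs (u - x) - ys (v - y) ≤ (ε + η) * (‖u - x‖ + ‖v - y‖)}

/-- The primal-dual subregularity constant `srg₁⁺` (via `ε`-coderivatives). -/
noncomputable def srg1plus (F : X → Set Y) (xb : X) (yb : Y) : ℝ≥0∞ :=
  ⨆ (ε : ℝ) (_ : 0 < ε), sInf {r : ℝ≥0∞ | ∃ (x : X) (y : Y)
    (xs : X →L[ℝ] ℝ) (ys : Y →L[ℝ] ℝ), y ∈ F x ∧ ‖ys‖ = 1 ∧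
    xs ∈ epsCoderiv ε F x y ys ∧ 0 < ‖x - xb‖ ∧ ‖x - xb‖ < ε ∧
    r = ENNReal.ofReal (‖y - yb‖ / ‖x - xb‖) + ENNReal.ofReal ‖xs‖}

/-- The Lipschitz modulus of `f` at `xb`. -/
noncomputable def lipMod (f : X → Y) (xb : X) : ℝ≥0∞ :=
  Filter.limsup (fun p : X × X => edist (f p.1) (f p.2) / edist p.1 p.2)
    ((𝓝 (xb, xb)) ⊓ Filter.principal {p : X × X | p.1 ≠ p.2})

/-- `F` is (metrically) subregular at `(xb, yb)`. -/
def Subregular (F : X → Set Y) (xb : X) (yb : Y) : Prop :=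
  ∃ α : ℝ≥0, 0 < α ∧ ∃ δ > (0:ℝ), ∀ x, ‖x - xb‖ < δ →
    (α : ℝ≥0∞) * infEdist x (svInv F yb) ≤ infEdist yb (F x)

/-- The radius of subregularity of `F` at `(xb, yb)` with respect to Lipschitz
continuous perturbations vanishing at `xb`. -/
noncomputable def radSRlip (F : X → Set Y) (xb : X) (yb : Y) : ℝ≥0∞ :=
  sInf {r : ℝ≥0∞ | ∃ f : X → Y, f xb = 0 ∧
    (∃ (K : ℝ≥0) (δ : ℝ), 0 < δ ∧ LipschitzOnWith K f (ball xb δ)) ∧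
    ¬ Subregular (addFun F f) xb yb ∧ r = lipMod f xb}

section Criteria

variable {F : X → Set Y} {xb : X} {yb : Y}

theorem epsCoderiv_mono {ε ε' : ℝ} (h : ε ≤ ε') {x : X} {y : Y} {ys : Y →L[ℝ] ℝ} :
    epsCoderiv ε F x y ys ⊆ epsCoderiv ε' F x y ys := by
  intro xs hxs η hη
  obtain ⟨δ, hδ, hxs⟩ := hxs η hη
  refine ⟨δ, hδ, fun u v hv huv => (hxs u v hv huv).trans ?_⟩
  gcongr

theorem exists_of_srg1plus_lt {c : ℝ} (hsrg : srg1plus F xb yb < ENNReal.ofReal c)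
    {ε : ℝ} (hε : 0 < ε) :
    ∃ x y xs ys, y ∈ F x ∧ ‖ys‖ = 1 ∧ xs ∈ epsCoderiv ε F x y ys ∧
      0 < ‖x - xb‖ ∧ ‖x - xb‖ < ε ∧ ‖y - yb‖ / ‖x - xb‖ + ‖xs‖ < c := by
  have hc : 0 < c := ENNReal.ofReal_pos.1 (zero_le.trans_lt hsrg)
  obtain ⟨r, ⟨x, y, xs, ys, hmem, hys, hcod, hpos, hlt, rfl⟩, hr⟩ :=
    sInf_lt_iff.1 ((le_iSup₂_of_le ε hε le_rfl).trans_lt hsrg)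
  refine ⟨x, y, xs, ys, hmem, hys, hcod, hpos, hlt, ?_⟩
  rwa [← ENNReal.ofReal_add (by positivity) (norm_nonneg _),
    ENNReal.ofReal_lt_ofReal_iff hc] at hr

theorem srg1plus_eq_zero_of_forall
    (h : ∀ ε > 0, ∃ x y ys, y ∈ F x ∧ ‖ys‖ = 1 ∧ 0 ∈ epsCoderiv ε F x y ys ∧
      0 < ‖x - xb‖ ∧ ‖x - xb‖ < ε ∧ ‖y - yb‖ ≤ ε * ‖x - xb‖) :
    srg1plus F xb yb = 0 := by
  refine le_antisymm (iSup₂_le fun ε hε => ?_) zero_le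
  refine ENNReal.le_of_forall_pos_le_add fun ν hν _ => ?_
  obtain ⟨x, y, ys, hmem, hys, hcod, hpos, hlt, hslope⟩ :=
    h (min ε ν) (lt_min hε hν)
  calc _ ≤ ENNReal.ofReal (‖y - yb‖ / ‖x - xb‖) + ENNReal.ofReal ‖(0 : X →L[ℝ] ℝ)‖ :=
        sInf_le (by exact ⟨x, y, 0, ys, hmem, hys, epsCoderiv_mono (min_le_left _ _) hcod,
          hpos, hlt.trans_le (min_le_left _ _), rfl⟩)
    _ ≤ 0 + ν := by
      rw [norm_zero, ENNReal.ofReal_zero, add_zero, zero_add, ← ENNReal.ofReal_coe_nnreal]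
      refine ENNReal.ofReal_le_ofReal ((div_le_iff₀ hpos).2 (hslope.trans ?_))
      gcongr
      exact min_le_right _ _

omit [NormedSpace ℝ X] [NormedSpace ℝ Y] in
theorem not_subregular_of_forall
    (h : ∀ ε > 0, ∃ x y R, ‖x - xb‖ < ε ∧ y ∈ F x ∧ 0 < R ∧ ‖y - yb‖ ≤ ε * R ∧
      ∀ u, ‖u - x‖ < R → yb ∉ F u) :
    ¬ Subregular F xb yb := by
  rintro ⟨α, hα, δ, hδ, hsub⟩
  obtain ⟨x, y, R, hx, hmem, hR, hy, hR'⟩ :=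
    h (min δ (α / 2)) (lt_min hδ (half_pos hα))
  have hfar : ENNReal.ofReal R ≤ infEDist x (svInv F yb) := by
    refine le_infEDist.2 fun u hu => ?_
    rw [edist_dist, dist_eq_norm, norm_sub_rev]
    exact ENNReal.ofReal_le_ofReal (not_lt.1 fun hlt => hR' u hlt hu)
  have hnear : infEDist yb (F x) ≤ ENNReal.ofReal (α / 2 * R) := by
    refine (infEDist_le_edist_of_mem hmem).trans ?_
    rw [edist_dist, dist_eq_norm, norm_sub_rev]
    exact ENNReal.ofReal_le_ofReal (hy.trans (by gcongr; exact min_le_right _ _))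
  have := (mul_le_mul_of_nonneg_left hfar zero_le).trans
    ((hsub x (hx.trans_le (min_le_left _ _))).trans hnear)
  rw [← ENNReal.ofReal_coe_nnreal, ← ENNReal.ofReal_mul (by positivity),
    ENNReal.ofReal_le_ofReal_iff (by positivity)] at this
  have hα' : (0 : ℝ) < α := hα
  nlinarith

omit [NormedSpace ℝ X] [NormedSpace ℝ Y] in
theorem lipMod_le_of_lipschitzWith {f : X → Y} {K : ℝ≥0} (hf : LipschitzWith K f) (xb : X) :
    lipMod f xb ≤ K :=
  limsup_le_of_le (by isBoundedDefault)
    (Eventually.of_forall fun p => ENNReal.div_le_of_le_mul (hf p.1 p.2))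

end Criteria

section AffineModel

variable {F : X → Set Y} {f : X → Y} {x : X} {y yb w : Y} {xs : X →L[ℝ] ℝ}
  {ys : Y →L[ℝ] ℝ} {c ε R τ : ℝ}

theorem sub_sub_eq_of_eq_affine {u : X} (z : Y)
    (hfu : f u = (yb - y) + (τ - xs (u - x)) • w) :
    z - f u - y = (z - (yb + τ • w)) + xs (u - x) • w := by
  rw [hfu]; module

theorem add_smul_mem_addFun (hf : ∀ u, ‖u - x‖ ≤ R → f u = (yb - y) + (τ - xs (u - x)) • w)
    (hR : 0 ≤ R) (hmem : y ∈ F x) : yb + τ • w ∈ addFun F f x := by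
  have := sub_sub_eq_of_eq_affine (yb + τ • w) (hf x (by simpa using hR))
  rw [sub_self, sub_self, map_zero, zero_smul, add_zero, sub_eq_zero] at this
  rwa [addFun, mem_ofPred_eq, this]

theorem zero_mem_epsCoderiv_addFun
    (hf : ∀ u, ‖u - x‖ ≤ R → f u = (yb - y) + (τ - xs (u - x)) • w) (hR : 0 < R)
    (hxs : ‖xs‖ ≤ c) (hw : ‖w‖ ≤ 1) (hq : |ys w - 1| ≤ ε)
    (hcod : xs ∈ epsCoderiv ε F x y ys) :
    (0 : X →L[ℝ] ℝ) ∈ epsCoderiv (ε * (1 + 2 * c)) (addFun F f) x (yb + τ • w) ys := by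
  have hc : 0 ≤ c := (norm_nonneg _).trans hxs
  have hε : 0 ≤ ε := (abs_nonneg _).trans hq
  intro η hη
  obtain ⟨δ, hδ, hδF⟩ := hcod (η / (1 + c)) (by positivity)
  refine ⟨min R (δ / (1 + c)), lt_min hR (by positivity), fun u z hz huz => ?_⟩
  set A := ‖u - x‖
  set B := ‖z - (yb + τ • w)‖
  set t := xs (u - x)
  have hB : 0 ≤ B := norm_nonneg _
  have hv := sub_sub_eq_of_eq_affine z (hf u (by linarith [min_le_left R (δ / (1 + c))]))
  have ht : |t| ≤ c * A := (xs.le_opNorm _).trans (by gcongr)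
  have hV : ‖z - f u - y‖ ≤ B + c * A := by
    rw [hv]
    refine (norm_add_le _ _).trans (add_le_add le_rfl ?_)
    rw [norm_smul, Real.norm_eq_abs]
    exact (mul_le_of_le_one_right (abs_nonneg _) hw).trans ht
  have hAV : A + ‖z - f u - y‖ ≤ (1 + c) * (A + B) := by nlinarith [norm_nonneg (u - x)]
  have hkey := hδF u (z - f u) hz <| hAV.trans_lt <| by
    rw [← lt_div_iff₀' (by positivity)]; exact huz.trans_le (min_le_right _ _)
  rw [hv, map_add, map_smul, smul_eq_mul, ← hv] at hkey
  have h1 : t * (ys w - 1) ≤ c * A * ε := by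
    refine (le_abs_self _).trans ?_
    rw [abs_mul]
    exact mul_le_mul ht hq (abs_nonneg _) (by positivity)
  have h2 : (ε + η / (1 + c)) * (A + ‖z - f u - y‖) ≤ (ε * (1 + c) + η) * (A + B) :=
    calc _ ≤ (ε + η / (1 + c)) * ((1 + c) * (A + B)) := by gcongr
      _ = (ε * (1 + c) + η) * (A + B) := by field_simp
  simp only [zero_apply, zero_sub]
  nlinarith [mul_nonneg (mul_nonneg hc hε) hB]

theorem notMem_addFun_of_norm_lt
    (hf : ∀ u, ‖u - x‖ ≤ R → f u = (yb - y) + (τ - xs (u - x)) • w)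
    (hτR : τ ≤ R) (hτ : 2 * ε * (4 + 3 * c) * R < τ) (hε : ε ≤ 1 / 2)
    (hxs : ‖xs‖ ≤ c) (hw : ‖w‖ ≤ 1) (hq : |ys w - 1| ≤ ε)
    (hδ : ∀ u v, v ∈ F u → ‖u - x‖ + ‖v - y‖ < (2 + c) * R →
      xs (u - x) - ys (v - y) ≤ (ε + ε) * (‖u - x‖ + ‖v - y‖))
    {u : X} (hu : ‖u - x‖ < R) : yb ∉ addFun F f u := by
  intro hmem
  have hc : 0 ≤ c := (norm_nonneg _).trans hxs
  have hε0 : 0 ≤ ε := (abs_nonneg _).trans hq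
  have hR : 0 < R := (norm_nonneg _).trans_lt hu
  set A := ‖u - x‖
  set t := xs (u - x)
  have hv : yb - f u - y = (t - τ) • w := by
    rw [sub_sub_eq_of_eq_affine yb (hf u hu.le)]; module
  have ht : |t| ≤ c * R := (xs.le_opNorm _).trans (by gcongr)
  have hτ0 : 0 ≤ τ := le_trans (by positivity) hτ.le
  have hV : ‖yb - f u - y‖ ≤ c * R + τ := by
    rw [hv, norm_smul, Real.norm_eq_abs]
    refine (mul_le_of_le_one_right (abs_nonneg _) hw).trans ?_
    exact (abs_sub _ _).trans (by rw [abs_of_nonneg hτ0]; linarith)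
  have hkey := hδ u _ hmem (by linarith)
  rw [hv, map_smul, smul_eq_mul, ← hv] at hkey
  have h1 : t * (ys w - 1) ≤ c * R * ε := by
    refine (le_abs_self _).trans ?_
    rw [abs_mul]
    exact mul_le_mul ht hq (abs_nonneg _) (by positivity)
  have hq' : 1 - ε ≤ ys w := by linarith [neg_abs_le (ys w - 1)]
  nlinarith [mul_le_mul_of_nonneg_left hq' hτ0]

end AffineModel

section Bump

omit [NormedSpace ℝ X]

noncomputable def plateau (a : X) (r R : ℝ) (u : X) : ℝ :=
  projIcc 0 1 zero_le_one ((R - ‖u - a‖) / (R - r))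

variable {a : X} {r R : ℝ}

theorem plateau_mem_Icc (u : X) : plateau a r R u ∈ Icc (0 : ℝ) 1 :=
  (projIcc 0 1 zero_le_one _).2

theorem plateau_eq_one (hrR : r < R) {u : X} (hu : ‖u - a‖ ≤ r) : plateau a r R u = 1 := by
  rw [plateau, projIcc_of_right_le _ ((le_div_iff₀ (sub_pos.2 hrR)).2 (by linarith))]

theorem plateau_eq_zero (hrR : r ≤ R) {u : X} (hu : R ≤ ‖u - a‖) : plateau a r R u = 0 := by
  rw [plateau, projIcc_of_le_left _
    (div_nonpos_of_nonpos_of_nonneg (by linarith) (by linarith))]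

theorem abs_plateau_sub_le (hrR : r < R) (u v : X) :
    |plateau a r R u - plateau a r R v| ≤ ‖u - v‖ / (R - r) := by
  refine (abs_projIcc_sub_projIcc _).trans ?_
  rw [div_sub_div_same, abs_div, abs_of_pos (sub_pos.2 hrR)]
  gcongr
  calc |R - ‖u - a‖ - (R - ‖v - a‖)| = |‖v - a‖ - ‖u - a‖| := by ring_nf
    _ ≤ ‖(v - a) - (u - a)‖ := abs_norm_sub_norm_le _ _
    _ = ‖u - v‖ := by rw [sub_sub_sub_cancel_right, norm_sub_rev]

end Bump

-- Clamping `xs (u - x)` at `±μ²ρ` keeps the cut-off linear term Lipschitz with constant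
-- `‖xs‖ + μ² / (1 - 2μ)` instead of about `‖xs‖ + c`.
noncomputable def bumpPiece (x : X) (yb y w : Y) (xs : X →L[ℝ] ℝ) (μ ρ R τ : ℝ) (u : X) : Y :=
  plateau x (μ * ρ) ((1 - μ) * ρ) u • (yb - y) +
    (τ * plateau x R (2 * R) u - plateau x (μ * ρ) ((1 - μ) * ρ) u *
      max (-(μ ^ 2 * ρ)) (min (μ ^ 2 * ρ) (xs (u - x)))) • w

section BumpPiece

variable {x : X} {yb y w : Y} {xs : X →L[ℝ] ℝ} {μ ρ R τ : ℝ}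

theorem bumpPiece_eq_zero (hμ : μ ≤ 1 / 2) (hρ : 0 ≤ ρ) (hR : 0 ≤ R)
    (h2R : 2 * R ≤ (1 - μ) * ρ) {u : X} (hu : (1 - μ) * ρ ≤ ‖u - x‖) :
    bumpPiece x yb y w xs μ ρ R τ u = 0 := by
  rw [bumpPiece, plateau_eq_zero (by nlinarith) hu, plateau_eq_zero (by linarith) (h2R.trans hu)]
  simp

theorem bumpPiece_eq_affine (hμ : μ < 1 / 2) (hρ : 0 < ρ) (hR : 0 < R) (hRμ : R ≤ μ * ρ)
    (hxsR : ‖xs‖ * R ≤ μ ^ 2 * ρ) {u : X} (hu : ‖u - x‖ ≤ R) :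
    bumpPiece x yb y w xs μ ρ R τ u = (yb - y) + (τ - xs (u - x)) • w := by
  have hclamp : |xs (u - x)| ≤ μ ^ 2 * ρ := by
    rw [← Real.norm_eq_abs]
    exact (xs.le_opNorm _).trans ((mul_le_mul_of_nonneg_left hu (norm_nonneg _)).trans hxsR)
  rw [bumpPiece, plateau_eq_one (by nlinarith) (hu.trans hRμ), plateau_eq_one (by linarith) hu,
    min_eq_right (abs_le.1 hclamp).2, max_eq_right (abs_le.1 hclamp).1]
  module

theorem norm_bumpPiece_sub_le {c : ℝ} (hμ0 : 0 ≤ μ) (hμ : μ < 1 / 2) (hρ : 0 < ρ) (hR : 0 < R)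
    (hτ : 0 ≤ τ) (hτR : τ ≤ μ * R) (hslope : ‖y - yb‖ / ρ + ‖xs‖ ≤ c) (hw : ‖w‖ ≤ 1)
    (u v : X) :
    ‖bumpPiece x yb y w xs μ ρ R τ u - bumpPiece x yb y w xs μ ρ R τ v‖ ≤
      (c + μ) / (1 - 2 * μ) * ‖u - v‖ := by
  have hs : -(μ ^ 2 * ρ) ≤ μ ^ 2 * ρ := by nlinarith
  set b := plateau x (μ * ρ) ((1 - μ) * ρ)
  set β := plateau x R (2 * R)
  set T : X → ℝ := fun u => projIcc (-(μ ^ 2 * ρ)) (μ ^ 2 * ρ) hs (xs (u - x))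
  set N := ‖u - v‖
  set D := (1 - 2 * μ) * ρ
  have hb : |b u - b v| ≤ N / D := by
    convert abs_plateau_sub_le (by nlinarith : μ * ρ < (1 - μ) * ρ) u v using 2; ring
  have hβ : |β u - β v| ≤ N / R := by
    convert abs_plateau_sub_le (a := x) (by linarith : R < 2 * R) u v using 2; ring
  have hT : |T u - T v| ≤ ‖xs‖ * N := by
    refine (abs_projIcc_sub_projIcc _).trans ?_
    rw [← map_sub, sub_sub_sub_cancel_right, ← Real.norm_eq_abs]
    exact xs.le_opNorm _
  have hbT : |b u * T u - b v * T v| ≤ ‖xs‖ * N + μ ^ 2 * ρ * (N / D) := by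
    have hb1 : |b u| ≤ 1 := abs_le.2 ⟨by linarith [(plateau_mem_Icc (a := x) (r := μ * ρ)
      (R := (1 - μ) * ρ) u).1], (plateau_mem_Icc u).2⟩
    rw [show b u * T u - b v * T v = b u * (T u - T v) + T v * (b u - b v) by ring]
    refine (abs_add_le _ _).trans (add_le_add ?_ ?_) <;> rw [abs_mul]
    · exact (mul_le_of_le_one_left (abs_nonneg _) hb1).trans hT
    · exact mul_le_mul (abs_le.2 (projIcc _ _ _ _).2) hb (abs_nonneg _) (by linarith)
  have hτβ : τ * |β u - β v| ≤ μ * N :=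
    calc τ * |β u - β v| ≤ (μ * R) * (N / R) := mul_le_mul hτR hβ (abs_nonneg _) (by positivity)
      _ = μ * N := by field_simp
  calc ‖bumpPiece x yb y w xs μ ρ R τ u - bumpPiece x yb y w xs μ ρ R τ v‖
      = ‖(b u - b v) • (yb - y) + (τ * (β u - β v) - (b u * T u - b v * T v)) • w‖ := by
        simp only [bumpPiece, b, β, T, coe_projIcc]; congr 1; module
    _ ≤ |b u - b v| * ‖y - yb‖ + (τ * |β u - β v| + |b u * T u - b v * T v|) := by
        refine (norm_add_le _ _).trans (add_le_add ?_ ?_)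
        · rw [norm_smul, Real.norm_eq_abs, norm_sub_rev]
        · rw [norm_smul, Real.norm_eq_abs]
          refine (mul_le_of_le_one_right (abs_nonneg _) hw).trans ((abs_sub _ _).trans ?_)
          rw [abs_mul, abs_of_nonneg hτ]
    _ ≤ N / D * ‖y - yb‖ + (μ * N + (‖xs‖ * N + μ ^ 2 * ρ * (N / D))) := by gcongr
    _ = ((‖y - yb‖ / ρ + μ ^ 2) / (1 - 2 * μ) + μ + ‖xs‖) * N := by
        simp only [D]; field_simp; ring
    _ ≤ (c + μ) / (1 - 2 * μ) * N := by
        gcongr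
        rw [div_add' _ _ _ (by linarith), div_add' _ _ _ (by linarith)]
        refine div_le_div_of_nonneg_right ?_ (by linarith)
        nlinarith [norm_nonneg xs, norm_nonneg (y - yb), div_nonneg (norm_nonneg (y - yb)) hρ.le]

end BumpPiece

theorem exists_norm_le_one_abs_apply_sub_one_le {ys : Y →L[ℝ] ℝ} (hys : ‖ys‖ = 1) {ε : ℝ}
    (hε : 0 < ε) : ∃ w, ‖w‖ ≤ 1 ∧ |ys w - 1| ≤ ε := by
  obtain ⟨w, hw, hlt⟩ := ys.exists_lt_apply_of_lt_opNorm (by rw [hys]; linarith : 1 - ε < ‖ys‖)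
  have hle : ‖ys w‖ ≤ 1 := (ys.le_opNorm w).trans (by rw [hys, one_mul]; exact hw.le)
  rcases le_or_gt 0 (ys w) with hpos | hneg
  · rw [Real.norm_of_nonneg hpos] at hlt hle
    exact ⟨w, hw.le, abs_le.2 ⟨by linarith, by linarith⟩⟩
  · rw [Real.norm_eq_abs, abs_of_neg hneg] at hlt hle
    exact ⟨-w, by rw [norm_neg]; exact hw.le, abs_le.2 ⟨by rw [map_neg]; linarith,
      by rw [map_neg]; linarith⟩⟩

theorem exists_local_perturbation {F : X → Set Y} {xb x : X} {yb y : Y} {xs : X →L[ℝ] ℝ}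
    {ys : Y →L[ℝ] ℝ} {c μ ε : ℝ} (hμ0 : 0 < μ) (hμ : μ ≤ 1 / 4) (hε : 0 < ε)
    (hεμ : 4 * ε * (4 + 3 * c) ≤ μ) (hmem : y ∈ F x) (hys : ‖ys‖ = 1)
    (hcod : xs ∈ epsCoderiv ε F x y ys) (hx : 0 < ‖x - xb‖)
    (hslope : ‖y - yb‖ / ‖x - xb‖ + ‖xs‖ ≤ c) :
    ∃ h : X → Y, (∀ u v, ‖h u - h v‖ ≤ (c + μ) / (1 - 2 * μ) * ‖u - v‖) ∧
      (∀ u, (1 - μ) * ‖x - xb‖ ≤ ‖u - x‖ → h u = 0) ∧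
      ∀ f : X → Y, (∀ u, ‖u - x‖ < (1 - μ) * ‖x - xb‖ → f u = h u) →
        ∃ (y' : Y) (R : ℝ), y' ∈ addFun F f x ∧
          0 ∈ epsCoderiv (ε * (1 + 2 * c)) (addFun F f) x y' ys ∧ 0 < R ∧ R ≤ ‖x - xb‖ ∧
          ‖y' - yb‖ ≤ 4 * ε * (4 + 3 * c) * R ∧ ∀ u, ‖u - x‖ < R → yb ∉ addFun F f u := by
  set ρ := ‖x - xb‖
  have hxs : ‖xs‖ ≤ c := le_of_add_le_of_nonneg_right hslope (by positivity)
  have hc : 0 ≤ c := (norm_nonneg _).trans hxs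
  obtain ⟨w, hw, hq⟩ := exists_norm_le_one_abs_apply_sub_one_le hys hε
  obtain ⟨δ, hδ, hδF⟩ := hcod ε hε
  set R := min (μ ^ 2 * ρ / (1 + c)) (δ / (2 + c))
  -- Large enough for `notMem_addFun_of_norm_lt`, yet `o(R)` as `ε → 0`.
  set τ := 4 * ε * (4 + 3 * c) * R
  have hR : 0 < R := lt_min (by positivity) (by positivity)
  have hRρ : (1 + c) * R ≤ μ ^ 2 * ρ := by
    rw [← le_div_iff₀' (by positivity)]; exact min_le_left _ _
  have hRδ : (2 + c) * R ≤ δ := by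
    rw [← le_div_iff₀' (by positivity)]; exact min_le_right _ _
  have hτR : τ ≤ μ * R := mul_le_mul_of_nonneg_right hεμ hR.le
  have hRρ' : R ≤ ρ := by
    have : μ ^ 2 * ρ ≤ ρ := mul_le_of_le_one_left hx.le (by nlinarith)
    nlinarith [mul_nonneg hc hR.le]
  have hτ' : 2 * ε * (4 + 3 * c) * R < τ := by
    have : 0 < ε * (4 + 3 * c) * R := by positivity
    linarith
  refine ⟨bumpPiece x yb y w xs μ ρ R τ,
    norm_bumpPiece_sub_le hμ0.le (by linarith) hx hR (by positivity) hτR hslope hw,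
    fun u hu => bumpPiece_eq_zero (by linarith) hx.le hR.le (by nlinarith) hu, fun f hf => ?_⟩
  have hfR : ∀ u, ‖u - x‖ ≤ R → f u = (yb - y) + (τ - xs (u - x)) • w := fun u hu =>
    (hf u (by nlinarith)).trans
      (bumpPiece_eq_affine (by linarith) hx hR (by nlinarith) (by nlinarith) hu)
  refine ⟨yb + τ • w, R, add_smul_mem_addFun hfR hR.le hmem,
    zero_mem_epsCoderiv_addFun hfR hR hxs hw hq hcod, hR, hRρ', ?_,
    fun u hu => notMem_addFun_of_norm_lt hfR (by nlinarith) hτ' (by nlinarith)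
      hxs hw hq (fun u v hv huv => hδF u v hv (huv.trans_le hRδ)) hu⟩
  rw [add_sub_cancel_left, norm_smul, Real.norm_of_nonneg (by positivity)]
  exact mul_le_of_le_one_right (by positivity) hw

section Glue

theorem exists_norm_eq_one_smul_eq [Nontrivial X] (v : X) : ∃ e : X, ‖e‖ = 1 ∧ v = ‖v‖ • e := by
  by_cases hv : v = 0
  · obtain ⟨e, he⟩ := exists_norm_eq X zero_le_one
    exact ⟨e, he, by simp [hv]⟩
  · refine ⟨‖v‖⁻¹ • v, norm_smul_inv_norm hv, ?_⟩
    rw [smul_smul, mul_inv_cancel₀ (norm_ne_zero_iff.2 hv), one_smul]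

omit [NormedSpace ℝ Y] in
theorem norm_le_mul_sub_of_eq_zero [Nontrivial X] {h : X → Y} {a u : X} {r L : ℝ}
    (hlip : ∀ u v, ‖h u - h v‖ ≤ L * ‖u - v‖) (hzero : ∀ u, r ≤ ‖u - a‖ → h u = 0)
    (hu : ‖u - a‖ ≤ r) : ‖h u‖ ≤ L * (r - ‖u - a‖) := by
  obtain ⟨e, he, hue⟩ := exists_norm_eq_one_smul_eq (u - a)
  have hp : ‖a + r • e - a‖ = r := by
    rw [add_sub_cancel_left, norm_smul, he, mul_one, Real.norm_of_nonneg ((norm_nonneg _).trans hu)]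
  have hup : u - (a + r • e) = (‖u - a‖ - r) • e := by rw [sub_smul, ← hue]; abel
  calc ‖h u‖ = ‖h u - h (a + r • e)‖ := by rw [hzero _ hp.ge, sub_zero]
    _ ≤ L * ‖u - (a + r • e)‖ := hlip _ _
    _ = L * (r - ‖u - a‖) := by
      rw [hup, norm_smul, he, mul_one, Real.norm_of_nonpos (by linarith), neg_sub]

variable {ι : Type*} {x : ι → X} {r : ι → ℝ} {h : ι → X → Y}

omit [NormedSpace ℝ X] [NormedSpace ℝ Y] in
theorem tsum_eq_of_norm_lt (hsep : Pairwise fun i j => r i + r j ≤ ‖x i - x j‖)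
    (hzero : ∀ i u, r i ≤ ‖u - x i‖ → h i u = 0) {i : ι} {u : X} (hu : ‖u - x i‖ < r i) :
    ∑' j, h j u = h i u := by
  refine tsum_eq_single i fun j hj => hzero j u ?_
  have := (hsep hj).trans (norm_sub_le_norm_sub_add_norm_sub (x j) u (x i))
  rw [norm_sub_rev (x j)] at this
  linarith

omit [NormedSpace ℝ X] [NormedSpace ℝ Y] in
theorem tsum_eq_zero_of_forall_le (hzero : ∀ i u, r i ≤ ‖u - x i‖ → h i u = 0) {u : X}
    (hu : ∀ i, r i ≤ ‖u - x i‖) : ∑' j, h j u = 0 := by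
  simp [hzero _ u (hu _)]

omit [NormedSpace ℝ Y] in
theorem norm_tsum_sub_tsum_le {L : ℝ} (hL : 0 ≤ L)
    (hsep : Pairwise fun i j => r i + r j ≤ ‖x i - x j‖)
    (hlip : ∀ i u v, ‖h i u - h i v‖ ≤ L * ‖u - v‖)
    (hzero : ∀ i u, r i ≤ ‖u - x i‖ → h i u = 0) (u v : X) :
    ‖∑' i, h i u - ∑' i, h i v‖ ≤ L * ‖u - v‖ := by
  have inside_outside : ∀ u v i, ‖u - x i‖ < r i → (∀ j, r j ≤ ‖v - x j‖) →
      ‖∑' i, h i u - ∑' i, h i v‖ ≤ L * ‖u - v‖ := by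
    intro u v i hu hv
    rw [tsum_eq_of_norm_lt hsep hzero hu, tsum_eq_zero_of_forall_le hzero hv, ← hzero i v (hv i)]
    exact hlip i u v
  by_cases hu : ∃ i, ‖u - x i‖ < r i
  · obtain ⟨i, hi⟩ := hu
    by_cases hv : ∃ j, ‖v - x j‖ < r j
    · obtain ⟨j, hj⟩ := hv
      rw [tsum_eq_of_norm_lt hsep hzero hi, tsum_eq_of_norm_lt hsep hzero hj]
      rcases eq_or_ne i j with rfl | hij
      · exact hlip i u v
      have hij' : r i + r j ≤ ‖x i - x j‖ := hsep hij
      have : Nontrivial X := nontrivial_of_ne (x i) (x j) fun hx => by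
        rw [hx, sub_self, norm_zero] at hij'
        linarith [norm_nonneg (u - x i), norm_nonneg (v - x j)]
      have htri : ‖x i - x j‖ ≤ ‖u - x i‖ + ‖u - v‖ + ‖v - x j‖ := by
        calc ‖x i - x j‖ = ‖(u - v) - (u - x i) + (v - x j)‖ := by congr 1; abel
          _ ≤ ‖u - x i‖ + ‖u - v‖ + ‖v - x j‖ := by
            linarith [norm_add_le ((u - v) - (u - x i)) (v - x j), norm_sub_le (u - v) (u - x i)]
      calc ‖h i u - h j v‖ ≤ ‖h i u‖ + ‖h j v‖ := norm_sub_le _ _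
        _ ≤ L * (r i - ‖u - x i‖) + L * (r j - ‖v - x j‖) :=
          add_le_add (norm_le_mul_sub_of_eq_zero (hlip i) (hzero i) hi.le)
            (norm_le_mul_sub_of_eq_zero (hlip j) (hzero j) hj.le)
        _ ≤ L * ‖u - v‖ := by rw [← mul_add]; gcongr; linarith
    · exact inside_outside u v i hi (by simpa using hv)
  · by_cases hv : ∃ j, ‖v - x j‖ < r j
    · obtain ⟨j, hj⟩ := hv
      rw [norm_sub_rev, norm_sub_rev u]
      exact inside_outside v u j hj (by simpa using hu)
    · rw [tsum_eq_zero_of_forall_le hzero (by simpa using hu),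
        tsum_eq_zero_of_forall_le hzero (by simpa using hv), sub_zero, norm_zero]
      positivity

end Glue

theorem exists_seq_of_forall_pos {α : Type*} (r : α → ℝ) (P : ℝ → α → Prop)
    (hP : ∀ ε > 0, ∃ a, 0 < r a ∧ r a < ε ∧ P ε a) {q E : ℝ} (hq0 : 0 < q) (hq1 : q ≤ 1)
    (hE : 0 < E) :
    ∃ (e : ℕ → ℝ) (a : ℕ → α), (∀ k, 0 < r (a k) ∧ r (a k) < e k ∧ P (e k) (a k)) ∧
      (∀ k, e k ≤ q ^ k * E) ∧ ∀ j k, j < k → r (a k) ≤ q * r (a j) := by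
  have : Nonempty α := ⟨(hP 1 one_pos).choose⟩
  choose! a ha using hP
  let e : ℕ → ℝ := fun k => Nat.rec E (fun _ ε => q * r (a ε)) k
  have he : ∀ k, 0 < e k := fun k => by
    induction k with
    | zero => exact hE
    | succ k ih => exact mul_pos hq0 (ha _ ih).1
  have hstep : ∀ k, r (a (e (k + 1))) < q * r (a (e k)) := fun k => (ha _ (he (k + 1))).2.1
  refine ⟨e, fun k => a (e k), fun k => ha _ (he k), fun k => ?_, fun j k hjk => ?_⟩
  · induction k with
    | zero => simp [e]
    | succ k ih =>
      calc e (k + 1) = q * r (a (e k)) := rfl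
        _ ≤ q * e k := by gcongr; exact (ha _ (he k)).2.1.le
        _ ≤ q ^ (k + 1) * E := by rw [pow_succ']; nlinarith
  · induction k, hjk using Nat.le_induction with
    | base => exact (hstep j).le
    | succ k _ ih =>
      exact (hstep k).le.trans (le_trans (mul_le_of_le_one_left (ha _ (he k)).1.le hq1) ih)

omit [NormedSpace ℝ X] in
theorem add_le_norm_sub_of_le {x x' xb : X} {μ : ℝ} (hμ : 0 ≤ μ)
    (h : ‖x' - xb‖ ≤ μ / 2 * ‖x - xb‖) :
    (1 - μ) * ‖x - xb‖ + (1 - μ) * ‖x' - xb‖ ≤ ‖x - x'‖ := by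
  have := norm_sub_norm_le (x - xb) (x' - xb)
  rw [sub_sub_sub_cancel_right] at this
  nlinarith [norm_nonneg (x' - xb)]

theorem exists_seq_of_srg1plus_lt {F : X → Set Y} {xb : X} {yb : Y} {c μ : ℝ} (hμ0 : 0 < μ)
    (hμ : μ ≤ 2) (hsrg : srg1plus F xb yb < ENNReal.ofReal c) :
    ∃ (e : ℕ → ℝ) (x : ℕ → X), (∀ k, 0 < ‖x k - xb‖ ∧ ‖x k - xb‖ < e k ∧
        ∃ y xs ys, y ∈ F (x k) ∧ ‖ys‖ = 1 ∧ xs ∈ epsCoderiv (e k) F (x k) y ys ∧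
          ‖y - yb‖ / ‖x k - xb‖ + ‖xs‖ ≤ c) ∧
      (∀ k, 4 * e k * (4 + 3 * c) ≤ (μ / 2) ^ k * μ) ∧
      ∀ j k, j < k → ‖x k - xb‖ ≤ μ / 2 * ‖x j - xb‖ := by
  have hc : 0 < c := ENNReal.ofReal_pos.1 (zero_le.trans_lt hsrg)
  obtain ⟨e, x, hx, he, hdecay⟩ := exists_seq_of_forall_pos (fun x => ‖x - xb‖)
    (fun ε x => ∃ y xs ys, y ∈ F x ∧ ‖ys‖ = 1 ∧ xs ∈ epsCoderiv ε F x y ys ∧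
      ‖y - yb‖ / ‖x - xb‖ + ‖xs‖ ≤ c)
    (fun ε hε => by
      obtain ⟨x, y, xs, ys, hmem, hys, hcod, hpos, hlt, hslope⟩ := exists_of_srg1plus_lt hsrg hε
      exact ⟨x, hpos, hlt, y, xs, ys, hmem, hys, hcod, hslope.le⟩)
    (q := μ / 2) (by positivity) (by linarith) (E := μ / (4 * (4 + 3 * c))) (by positivity)
  refine ⟨e, x, hx, fun k => ?_, hdecay⟩
  have := mul_le_mul_of_nonneg_right (he k) (by positivity : (0 : ℝ) ≤ 4 * (4 + 3 * c))
  rw [mul_assoc, div_mul_cancel₀ _ (by positivity)] at this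
  linarith

theorem exists_perturbation {F : X → Set Y} {xb : X} {yb : Y} {c μ : ℝ} (hμ0 : 0 < μ)
    (hμ : μ ≤ 1 / 4) (hsrg : srg1plus F xb yb < ENNReal.ofReal c) :
    ∃ f : X → Y, f xb = 0 ∧ LipschitzWith (Real.toNNReal ((c + μ) / (1 - 2 * μ))) f ∧
      srg1plus (addFun F f) xb yb = 0 ∧ ¬ Subregular (addFun F f) xb yb := by
  obtain ⟨e, x, hx, hscale, hdecay⟩ := exists_seq_of_srg1plus_lt hμ0 (by linarith) hsrg
  choose y xs ys hmem hys hcod hslope using fun k => (hx k).2.2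
  have he0 : ∀ k, 0 < e k := fun k => (hx k).1.trans (hx k).2.1
  have hsmall : ∀ ε > 0, ∃ k, 4 * e k * (4 + 3 * c) ≤ ε := fun ε hε => by
    obtain ⟨k, hk⟩ := exists_pow_lt_of_lt_one (div_pos hε hμ0) (by linarith : μ / 2 < 1)
    exact ⟨k, (hscale k).trans ((lt_div_iff₀ hμ0).1 hk).le⟩
  choose h hlip hzero hloc using fun k => exists_local_perturbation hμ0 hμ (he0 k)
    ((hscale k).trans (mul_le_of_le_one_left hμ0.le (pow_le_one₀ (by positivity)
      (by linarith)))) (hmem k) (hys k) (hcod k) (hx k).1 (hslope k)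
  have hsep : Pairwise fun j k =>
      (1 - μ) * ‖x j - xb‖ + (1 - μ) * ‖x k - xb‖ ≤ ‖x j - x k‖ := by
    intro j k hjk
    rcases hjk.lt_or_gt with hjk | hjk
    · exact add_le_norm_sub_of_le hμ0.le (hdecay j k hjk)
    · rw [add_comm, norm_sub_rev (x j) (x k)]; exact add_le_norm_sub_of_le hμ0.le (hdecay k j hjk)
  have hc : 0 ≤ c := (norm_nonneg _).trans (le_of_add_le_of_nonneg_right (hslope 0) (by positivity))
  have hL : 0 ≤ (c + μ) / (1 - 2 * μ) := div_nonneg (by linarith) (by linarith)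
  have hf : ∀ k u, ‖u - x k‖ < (1 - μ) * ‖x k - xb‖ → ∑' j, h j u = h k u :=
    fun k u hu => tsum_eq_of_norm_lt (r := fun k => (1 - μ) * ‖x k - xb‖) hsep hzero hu
  refine ⟨fun u => ∑' k, h k u, ?_, ?_, srg1plus_eq_zero_of_forall fun ε hε => ?_,
    not_subregular_of_forall fun ε hε => ?_⟩
  · refine tsum_eq_zero_of_forall_le (r := fun k => (1 - μ) * ‖x k - xb‖) hzero fun k => ?_
    rw [norm_sub_rev xb]
    nlinarith [(hx k).1]
  · refine LipschitzWith.of_dist_le_mul fun u v => ?_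
    rw [dist_eq_norm, dist_eq_norm, Real.coe_toNNReal _ hL]
    exact norm_tsum_sub_tsum_le hL hsep hlip hzero u v
  · obtain ⟨k, hk⟩ := hsmall ε hε
    obtain ⟨y', R, hy', hcod', hR, hRρ, hy'b, -⟩ := hloc k _ (hf k)
    refine ⟨x k, y', ys k, hy', hys k, epsCoderiv_mono (by nlinarith [he0 k]) hcod', (hx k).1,
      by nlinarith [(hx k).2.1, he0 k], hy'b.trans ?_⟩
    exact (mul_le_mul_of_nonneg_right hk hR.le).trans (by gcongr)
  · obtain ⟨k, hk⟩ := hsmall ε hε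
    obtain ⟨y', R, hy', -, hR, -, hy'b, hfar⟩ := hloc k _ (hf k)
    exact ⟨x k, y', R, by nlinarith [(hx k).2.1, he0 k], hy', hR,
      hy'b.trans (mul_le_mul_of_nonneg_right hk hR.le), hfar⟩

theorem exists_pos_div_lt {c γ : ℝ} (hcγ : c < γ) :
    ∃ μ, 0 < μ ∧ μ ≤ 1 / 4 ∧ (c + μ) / (1 - 2 * μ) < γ := by
  have hcont : ContinuousAt (fun μ : ℝ => (c + μ) / (1 - 2 * μ)) 0 := by
    fun_prop (disch := norm_num)
  have hnear := hcont.eventually (gt_mem_nhds (by simpa using hcγ))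
  obtain ⟨μ, hμγ, hμ⟩ := ((hnear.filter_mono nhdsWithin_le_nhds).and
    (Ioc_mem_nhdsGT (by norm_num : (0 : ℝ) < 1 / 4))).exists
  exact ⟨μ, hμ.1, hμ.2, hμγ⟩

theorem exists_perturbation_of_lt {F : X → Set Y} {xb : X} {yb : Y} {γ : ℝ}
    (hsrg : srg1plus F xb yb < ENNReal.ofReal γ) :
    ∃ f : X → Y, f xb = 0 ∧ (∃ K : ℝ≥0, LipschitzWith K f ∧ (K : ℝ≥0∞) < ENNReal.ofReal γ) ∧
      srg1plus (addFun F f) xb yb = 0 ∧ ¬ Subregular (addFun F f) xb yb := by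
  obtain ⟨c, -, hsrgc, hcγ⟩ := ENNReal.lt_iff_exists_real_btwn.1 hsrg
  have hγ : 0 < γ := ENNReal.ofReal_pos.1 (zero_le.trans_lt hcγ)
  obtain ⟨μ, hμ0, hμ, hμγ⟩ := exists_pos_div_lt ((ENNReal.ofReal_lt_ofReal_iff hγ).1 hcγ)
  obtain ⟨f, hf0, hlip, hsrg0, hsub⟩ := exists_perturbation hμ0 hμ hsrgc
  exact ⟨f, hf0, ⟨_, hlip, (ENNReal.ofReal_lt_ofReal_iff hγ).2 hμγ⟩, hsrg0, hsub⟩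

theorem radSRlip_le_srg1plus_general
    (F : X → Set Y) (xb : X) (yb : Y) (γ : ℝ) :
    (srg1plus F xb yb < ENNReal.ofReal γ →
      ∃ f : X → Y, f xb = 0 ∧
        (∃ (K : ℝ≥0) (δ : ℝ), 0 < δ ∧ LipschitzOnWith K f (ball xb δ)) ∧
        lipMod f xb < ENNReal.ofReal γ ∧ srg1plus (addFun F f) xb yb = 0) ∧
    radSRlip F xb yb ≤ srg1plus F xb yb := by
  refine ⟨fun hsrg => ?_, le_of_forall_gt fun r hr => ?_⟩
  · obtain ⟨f, hf0, ⟨K, hlip, hK⟩, hsrg0, -⟩ := exists_perturbation_of_lt hsrg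
    exact ⟨f, hf0, ⟨K, 1, one_pos, hlip.lipschitzOnWith⟩,
      (lipMod_le_of_lipschitzWith hlip xb).trans_lt hK, hsrg0⟩
  · obtain ⟨γ', -, hγ', hγ'r⟩ := ENNReal.lt_iff_exists_real_btwn.1 hr
    obtain ⟨f, hf0, ⟨K, hlip, hK⟩, -, hsub⟩ := exists_perturbation_of_lt hγ'
    calc radSRlip F xb yb ≤ lipMod f xb :=
          sInf_le ⟨f, hf0, ⟨K, 1, one_pos, hlip.lipschitzOnWith⟩, hsub, rfl⟩
      _ ≤ K := lipMod_le_of_lipschitzWith hlip xb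
      _ < r := hK.trans hγ'r

/-- Lemma 5.5(i) and the estimate rad[SR]_lip ≤ srg₁⁺ (Theorem 5.4, (5.11)). -/
theorem radSRlip_le_srg1plus [CompleteSpace X] [CompleteSpace Y]
    (F : X → Set Y) (xb : X) (yb : Y) (h : yb ∈ F xb) (γ : ℝ) (hγ : 0 < γ) :
    (srg1plus F xb yb < ENNReal.ofReal γ →
      ∃ f : X → Y, f xb = 0 ∧
        (∃ (K : ℝ≥0) (δ : ℝ), 0 < δ ∧ LipschitzOnWith K f (ball xb δ)) ∧
        lipMod f xb < ENNReal.ofReal γ ∧ srg1plus (addFun F f) xb yb = 0) ∧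
    radSRlip F xb yb ≤ srg1plus F xb yb :=
  radSRlip_le_srg1plus_general F xb yb γ
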